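/- arXiv:2509.06222 — 6 statements merged into one kernel-verified Lean document; each statement's English description precedes it below -/
import Mathlib

section
/- Let X be a set. The quotient of the disjoint union ⨿_{n ≥ 1} X^n by the equivalence relation generated by the diagonal maps Δ_φ : X^J → X^I (for surjections φ : I ↠ J of nonempty finite sets, sending (x_j) to the tuple (x_{φ(i)})) is in canonical bijection with the set of nonempty finite subsets of X; the bijection sends a tuple to the set of its entries. -/
universe u

/-- The relation on `⨿_{n ≥ 1} X^n` generated by the diagonal maps: a tuple `a`
is related to a tuple `b` if `a` is obtained from `b` by reindexing along a
surjection, i.e. `a = Δ_φ(b) = b ∘ φ` for some surjection `φ`. -/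
def RanRel (X : Type u) :
    (Σ n : ℕ, Fin (n + 1) → X) → (Σ n : ℕ, Fin (n + 1) → X) → Prop :=
  fun a b => ∃ φ : Fin (a.1 + 1) → Fin (b.1 + 1), Function.Surjective φ ∧ a.2 = b.2 ∘ φ

lemma ranRel_of_range_eq {X : Type u} (a b : Σ n : ℕ, Fin (n + 1) → X)
    (h : Set.range a.2 = Set.range b.2) :
    Quot.mk (RanRel X) a = Quot.mk (RanRel X) b := by
  -- common refinement: concatenation of a and b
  set c : Σ n : ℕ, Fin (n + 1) → X :=
    ⟨a.1 + b.1 + 1, fun i =>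
      if h : (i : ℕ) < a.1 + 1 then a.2 ⟨i, h⟩ else b.2 ⟨i - (a.1 + 1), by omega⟩⟩ with hc
  have hc1 : c.1 = a.1 + b.1 + 1 := rfl
  have hca : RanRel X c a := by
    have hsub : ∀ j : Fin (b.1 + 1), ∃ k : Fin (a.1 + 1), a.2 k = b.2 j := by
      intro j
      have : b.2 j ∈ Set.range a.2 := h ▸ Set.mem_range_self j
      exact this
    refine ⟨fun i => if hi : (i : ℕ) < a.1 + 1 then ⟨i, hi⟩
      else (hsub ⟨i - (a.1 + 1), by omega⟩).choose, ?_, ?_⟩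
    · intro k
      refine ⟨⟨k, by omega⟩, ?_⟩
      simp [k.isLt]
    · funext i
      by_cases hi : (i : ℕ) < a.1 + 1
      · simp only [c, Function.comp_apply, dif_pos hi]
      · simp only [c, Function.comp_apply, dif_neg hi]
        exact ((hsub ⟨i - (a.1 + 1), by omega⟩).choose_spec).symm
  have hcb : RanRel X c b := by
    have hsub : ∀ j : Fin (a.1 + 1), ∃ k : Fin (b.1 + 1), b.2 k = a.2 j := by
      intro j
      have : a.2 j ∈ Set.range b.2 := h ▸ Set.mem_range_self j
      exact this
    refine ⟨fun i => if hi : (i : ℕ) < a.1 + 1 then (hsub ⟨i, hi⟩).choose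
      else ⟨i - (a.1 + 1), by omega⟩, ?_, ?_⟩
    · intro k
      refine ⟨⟨k + (a.1 + 1), by omega⟩, ?_⟩
      have : ¬ ((k : ℕ) + (a.1 + 1) < a.1 + 1) := by omega
      simp [this]
    · funext i
      by_cases hi : (i : ℕ) < a.1 + 1
      · simp only [c, Function.comp_apply, dif_pos hi]
        exact ((hsub ⟨i, hi⟩).choose_spec).symm
      · simp only [c, Function.comp_apply, dif_neg hi]
  calc Quot.mk (RanRel X) a = Quot.mk (RanRel X) c := (Quot.sound hca).symm
    _ = Quot.mk (RanRel X) b := Quot.sound hcb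

/-- The quotient of the disjoint union `⨿_{n ≥ 1} X^n` by the equivalence
relation generated by the diagonal maps `Δ_φ` (for surjections `φ` of nonempty
finite index sets) is in canonical bijection with the set of nonempty finite
subsets of `X`; the bijection sends a tuple to the set of its entries. -/
theorem ranColimit_equiv_finiteSubsets (X : Type u) :
    ∃ e : Quot (RanRel X) ≃ {s : Set X // s.Finite ∧ s.Nonempty},
      ∀ t : Σ n : ℕ, Fin (n + 1) → X,
        e (Quot.mk (RanRel X) t) =
          ⟨Set.range t.2, Set.finite_range t.2, Set.range_nonempty t.2⟩ := by
  let f : Quot (RanRel X) → {s : Set X // s.Finite ∧ s.Nonempty} :=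
    Quot.lift (fun t => ⟨Set.range t.2, Set.finite_range t.2, Set.range_nonempty t.2⟩)
      (by
        rintro a b ⟨φ, hφ, hab⟩
        apply Subtype.ext
        simp only
        rw [hab, Set.range_comp, hφ.range_eq, Set.image_univ])
  have hinj : Function.Injective f := by
    intro x y
    induction x using Quot.ind with | _ a =>
    induction y using Quot.ind with | _ b =>
    intro hxy
    simp only [f] at hxy
    exact ranRel_of_range_eq a b (congrArg Subtype.val hxy)
  have hsurj : Function.Surjective f := by
    rintro ⟨s, hfin, hne⟩
    obtain ⟨x0, hx0⟩ := hne
    have : Nonempty s := ⟨⟨x0, hx0⟩⟩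
    have hfs : Finite s := hfin
    obtain ⟨n, ⟨eqv⟩⟩ := Finite.exists_equiv_fin s
    have hn : 1 ≤ n := by
      rcases n with _ | n
      · exact (eqv ⟨x0, hx0⟩).elim0
      · omega
    refine ⟨Quot.mk _ ⟨n - 1, fun i => (eqv.symm ⟨i, by omega⟩ : s)⟩, ?_⟩
    apply Subtype.ext
    simp only [f]
    ext x
    constructor
    · rintro ⟨i, rfl⟩
      exact (eqv.symm ⟨i, by omega⟩).2
    · intro hx
      refine ⟨⟨eqv ⟨x, hx⟩, by have := (eqv ⟨x, hx⟩).isLt; omega⟩, ?_⟩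
      simp
  exact ⟨Equiv.ofBijective f ⟨hinj, hsurj⟩, fun t => rfl⟩
end

section
/- Let (X_i), (Y_i), (Z_i) be ℕ-indexed diagrams of topological spaces whose transition maps are closed embeddings, with compatible maps f_i : X_i → Z_i and g_i : Y_i → Z_i. If each X_i and Y_i is locally compact Hausdorff and each Z_i is Hausdorff, then the natural map colim_i (X_i ×_{Z_i} Y_i) → (colim_i X_i) ×_{colim_i Z_i} (colim_i Y_i) is a homeomorphism. -/
open Topology

universe u

/-- The relation generating the sequential colimit: a point of `X n` is
identified with its image in `X (n+1)`. -/
def SeqRel (X : ℕ → Type u) (ι : ∀ n, X n → X (n + 1)) :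
    (Σ n, X n) → (Σ n, X n) → Prop :=
  fun a b => b = ⟨a.1 + 1, ι a.1 a.2⟩

/-- The sequential colimit of an `ℕ`-indexed system of types. -/
def SeqColim (X : ℕ → Type u) (ι : ∀ n, X n → X (n + 1)) : Type u :=
  Quot (SeqRel X ι)

/-- The canonical map from the `n`-th stage to the sequential colimit. -/
def SeqColim.mk (X : ℕ → Type u) (ι : ∀ n, X n → X (n + 1)) (n : ℕ) (x : X n) :
    SeqColim X ι :=
  Quot.mk _ ⟨n, x⟩

/-- The sequential colimit carries the final topology with respect to the maps
from the stages. -/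
instance seqColimTopology (X : ℕ → Type u) (ι : ∀ n, X n → X (n + 1))
    [∀ n, TopologicalSpace (X n)] : TopologicalSpace (SeqColim X ι) :=
  ⨆ n, TopologicalSpace.coinduced (SeqColim.mk X ι n) inferInstance

theorem SeqColim.mk_succ {X : ℕ → Type u} (ι : ∀ n, X n → X (n + 1)) (n : ℕ) (x : X n) :
    SeqColim.mk X ι (n + 1) (ι n x) = SeqColim.mk X ι n x :=
  (Quot.sound (r := SeqRel X ι) (a := ⟨n, x⟩) (b := ⟨n + 1, ι n x⟩) rfl).symm

/-- The universal map out of a sequential colimit. -/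
def SeqColim.desc {X : ℕ → Type u} {ι : ∀ n, X n → X (n + 1)} {C : Sort*}
    (h : ∀ n, X n → C) (compat : ∀ n x, h (n + 1) (ι n x) = h n x) :
    SeqColim X ι → C :=
  Quot.lift (fun a => h a.1 a.2) (by
    intro a b hb
    have hb' : b = ⟨a.1 + 1, ι a.1 a.2⟩ := hb
    subst hb'
    exact (compat a.1 a.2).symm)

/-- The topological fiber product of `f : X → Z` and `g : Y → Z`. -/
abbrev FibProd {X Y Z : Type u} (f : X → Z) (g : Y → Z) : Type u :=
  {p : X × Y // f p.1 = g p.2}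

/-- The transition maps of the `ℕ`-indexed system of fiber products. -/
def fibTrans {X Y Z : ℕ → Type u}
    (ιX : ∀ n, X n → X (n + 1)) (ιY : ∀ n, Y n → Y (n + 1)) (ιZ : ∀ n, Z n → Z (n + 1))
    (f : ∀ n, X n → Z n) (g : ∀ n, Y n → Z n)
    (hf : ∀ n x, f (n + 1) (ιX n x) = ιZ n (f n x))
    (hg : ∀ n y, g (n + 1) (ιY n y) = ιZ n (g n y)) (n : ℕ) :
    FibProd (f n) (g n) → FibProd (f (n + 1)) (g (n + 1)) :=
  fun p => ⟨(ιX n p.1.1, ιY n p.1.2), by rw [hf, hg, p.2]⟩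

/-- The map induced on sequential colimits by a compatible family of maps. -/
def colimMap {X Z : ℕ → Type u} (ιX : ∀ n, X n → X (n + 1)) (ιZ : ∀ n, Z n → Z (n + 1))
    (f : ∀ n, X n → Z n) (hf : ∀ n x, f (n + 1) (ιX n x) = ιZ n (f n x)) :
    SeqColim X ιX → SeqColim Z ιZ :=
  SeqColim.desc (fun n x => SeqColim.mk Z ιZ n (f n x))
    (fun n x => by
      show SeqColim.mk Z ιZ (n + 1) (f (n + 1) (ιX n x)) = SeqColim.mk Z ιZ n (f n x)
      rw [hf n x]; exact SeqColim.mk_succ ιZ n (f n x))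

/-- The natural comparison map
`colim_i (X_i ×_{Z_i} Y_i) → (colim_i X_i) ×_{colim_i Z_i} (colim_i Y_i)`. -/
def comparisonMap {X Y Z : ℕ → Type u}
    (ιX : ∀ n, X n → X (n + 1)) (ιY : ∀ n, Y n → Y (n + 1)) (ιZ : ∀ n, Z n → Z (n + 1))
    (f : ∀ n, X n → Z n) (g : ∀ n, Y n → Z n)
    (hf : ∀ n x, f (n + 1) (ιX n x) = ιZ n (f n x))
    (hg : ∀ n y, g (n + 1) (ιY n y) = ιZ n (g n y)) :
    SeqColim (fun n => FibProd (f n) (g n)) (fibTrans ιX ιY ιZ f g hf hg) →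
      FibProd (colimMap ιX ιZ f hf) (colimMap ιY ιZ g hg) :=
  SeqColim.desc
    (fun n p =>
      ⟨(SeqColim.mk X ιX n p.1.1, SeqColim.mk Y ιY n p.1.2), by
        show SeqColim.mk Z ιZ n (f n p.1.1) = SeqColim.mk Z ιZ n (g n p.1.2)
        rw [p.2]⟩)
    (fun n p => by
      apply Subtype.ext
      show (SeqColim.mk X ιX (n + 1) (ιX n p.1.1), SeqColim.mk Y ιY (n + 1) (ιY n p.1.2)) =
        (SeqColim.mk X ιX n p.1.1, SeqColim.mk Y ιY n p.1.2)
      rw [SeqColim.mk_succ, SeqColim.mk_succ])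

/-!
Bijectivity is formal: a sequential colimit of sets commutes with fibre products, because two
stagewise representatives that agree in a colimit, or whose images in `colim Z` agree, already do
so at some finite stage. Continuity is clear, so the content is openness. Let `O` be open in the
colimit of the fibre products and let `p ∈ O` live at stage `n`. As `Z_k` is Hausdorff,
`X_k ×_{Z_k} Y_k` is closed in `X_k × Y_k`, so the pairs that lie off the fibre product or map into
`O` form an open set `V_k`, and injectivity of `Z_k → Z_{k+1}` makes `X_k × Y_k → X_{k+1} × Y_{k+1}`
carry `V_k` into `V_{k+1}`. Local compactness and the tube lemma then give compact rectangles
`K_k × L_k ⊆ V_k` around `p` whose images at the next stage lie in the interiors of `K_{k+1}` and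
`L_{k+1}`. The unions of these interiors are open in `colim X` and `colim Y`, and the trace of their
product on the fibre product of the colimits lies in the image of `O`.
-/

open Function Set Filter

namespace SeqColim

section Transition

variable {X : ℕ → Type u}

def transition (ι : ∀ n, X n → X (n + 1)) {n m : ℕ} (h : n ≤ m) (x : X n) : X m :=
  Nat.leRecOn h (fun {k} => ι k) x

variable {ι : ∀ n, X n → X (n + 1)}

theorem transition_self {n : ℕ} (x : X n) : transition ι le_rfl x = x :=
  Nat.leRecOn_self x

theorem transition_succ {n m : ℕ} (h : n ≤ m) {h' : n ≤ m + 1} (x : X n) :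
    transition ι h' x = ι m (transition ι h x) :=
  Nat.leRecOn_succ h x

theorem transition_transition {n m k : ℕ} (h₁ : n ≤ m) (h₂ : m ≤ k) (x : X n) :
    transition ι h₂ (transition ι h₁ x) = transition ι (h₁.trans h₂) x :=
  (Nat.leRecOn_trans h₁ h₂ x).symm

theorem mk_transition {n m : ℕ} (h : n ≤ m) (x : X n) :
    mk X ι m (transition ι h x) = mk X ι n x := by
  induction m, h using Nat.le_induction with
  | base => rw [transition_self]
  | succ m hm ih => rw [transition_succ hm, mk_succ, ih]

theorem exists_mk_eq (w : SeqColim X ι) : ∃ n x, mk X ι n x = w := by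
  obtain ⟨⟨n, x⟩, rfl⟩ := Quot.exists_rep w
  exact ⟨n, x, rfl⟩

theorem eventually_transition_eq_of_mk_eq {n m : ℕ} {x : X n} {y : X m}
    (hxy : mk X ι n x = mk X ι m y) :
    ∀ᶠ k in atTop, ∃ (hn : n ≤ k) (hm : m ≤ k), transition ι hn x = transition ι hm y := by
  let r : (Σ n, X n) → (Σ n, X n) → Prop := fun a b =>
    ∀ᶠ k in atTop, ∃ (ha : a.1 ≤ k) (hb : b.1 ≤ k), transition ι ha a.2 = transition ι hb b.2
  have hr : Equivalence r :=
    { refl := fun a => (eventually_ge_atTop a.1).mono fun k hk => ⟨hk, hk, rfl⟩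
      symm := fun hab => hab.mono fun k ⟨ha, hb, e⟩ => ⟨hb, ha, e.symm⟩
      trans := fun hab hbc => (hab.and hbc).mono
        fun k ⟨⟨ha, _, e⟩, ⟨_, hc, e'⟩⟩ => ⟨ha, hc, e.trans e'⟩ }
  have hrel : ∀ a b, SeqRel X ι a b → r a b := by
    rintro ⟨n, x⟩ _ rfl
    refine (eventually_ge_atTop (n + 1)).mono fun k hk => ⟨(Nat.le_succ n).trans hk, hk, ?_⟩
    show transition ι _ x = transition ι hk (ι n x)
    rw [← transition_transition (Nat.le_succ n) hk, transition_succ le_rfl, transition_self]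
  exact hr.eqvGen_iff.1 (Relation.EqvGen.mono hrel _ _ (Quot.eq.1 hxy))

theorem apply_transition {Z : ℕ → Type u} {ιZ : ∀ n, Z n → Z (n + 1)} (f : ∀ n, X n → Z n)
    (hf : ∀ n x, f (n + 1) (ι n x) = ιZ n (f n x)) {n m : ℕ} (h : n ≤ m) (x : X n) :
    f m (transition ι h x) = transition ιZ h (f n x) := by
  induction m, h using Nat.le_induction with
  | base => rw [transition_self, transition_self]
  | succ m hm ih => rw [transition_succ hm, transition_succ hm, hf, ih]

theorem mapsTo_transition {n : ℕ} {U : ∀ j, Set (X (n + j))}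
    (hU : ∀ j, MapsTo (ι (n + j)) (U j) (U (j + 1))) {j j' : ℕ} (hj : j ≤ j')
    (h : n + j ≤ n + j') : MapsTo (transition ι h) (U j) (U j') := by
  induction j', hj using Nat.le_induction with
  | base => intro x hx; rwa [transition_self]
  | succ j' hj ih =>
    intro x hx
    rw [transition_succ (by omega : n + j ≤ n + j')]
    exact hU j' (ih _ hx)

end Transition

section Topology

variable {X : ℕ → Type u} {ι : ∀ n, X n → X (n + 1)} [∀ n, TopologicalSpace (X n)]

theorem continuous_mk (n : ℕ) : Continuous (mk X ι n) :=
  continuous_iff_coinduced_le.2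
    (le_iSup (fun n => TopologicalSpace.coinduced (mk X ι n) inferInstance) n)

theorem isOpen_iff {s : Set (SeqColim X ι)} : IsOpen s ↔ ∀ n, IsOpen (mk X ι n ⁻¹' s) := by
  simp only [← isOpen_coinduced]
  exact isOpen_iSup_iff

theorem continuous_desc {C : Type*} [TopologicalSpace C] {h : ∀ n, X n → C}
    {compat : ∀ n x, h (n + 1) (ι n x) = h n x} (hc : ∀ n, Continuous (h n)) :
    Continuous (desc h compat) :=
  continuous_iSup_dom.2 fun n => continuous_coinduced_dom.2 (hc n)

theorem continuous_transition (hι : ∀ n, Continuous (ι n)) {n m : ℕ} (h : n ≤ m) :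
    Continuous (transition ι h) := by
  induction m, h using Nat.le_induction with
  | base => exact (continuous_congr fun x => (transition_self x).symm).1 continuous_id
  | succ m hm ih =>
    exact (continuous_congr fun x => (transition_succ hm x).symm).1 ((hι m).comp ih)

theorem isOpen_iUnion_image_mk (hι : ∀ n, Continuous (ι n)) {n : ℕ} {U : ∀ j, Set (X (n + j))}
    (hUo : ∀ j, IsOpen (U j)) (hU : ∀ j, MapsTo (ι (n + j)) (U j) (U (j + 1))) :
    IsOpen (⋃ j, mk X ι (n + j) '' U j) := by
  refine isOpen_iff.2 fun r => ?_
  have hpre : mk X ι r ⁻¹' ⋃ j, mk X ι (n + j) '' U j =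
      ⋃ (j) (h : r ≤ n + j), transition ι h ⁻¹' U j := by
    ext x
    simp only [mem_preimage, mem_iUnion, mem_image]
    constructor
    · rintro ⟨j, z, hz, hzx⟩
      obtain ⟨k, hj, hr, e⟩ := (eventually_transition_eq_of_mk_eq hzx).exists
      obtain ⟨i, rfl⟩ : ∃ i, k = n + i := ⟨k - n, by omega⟩
      exact ⟨i, hr, e ▸ mapsTo_transition hU (by omega) hj hz⟩
    · rintro ⟨j, h, hx⟩
      exact ⟨j, _, hx, mk_transition h x⟩
  rw [hpre]
  exact isOpen_iUnion fun j => isOpen_iUnion fun h => (hUo j).preimage (continuous_transition hι h)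

end Topology

end SeqColim

open SeqColim

theorem exists_isCompact_prod_subset {A B : Type*} [TopologicalSpace A] [TopologicalSpace B]
    [LocallyCompactSpace A] [LocallyCompactSpace B] {K : Set A} {L : Set B} (hK : IsCompact K)
    (hL : IsCompact L) {V : Set (A × B)} (hV : IsOpen V) (hKL : K ×ˢ L ⊆ V) :
    ∃ K' L', IsCompact K' ∧ IsCompact L' ∧ K ⊆ interior K' ∧ L ⊆ interior L' ∧ K' ×ˢ L' ⊆ V := by
  obtain ⟨u, v, hu, hv, hKu, hLv, huv⟩ := generalized_tube_lemma hK hL hV hKL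
  obtain ⟨K', hK', hKK', hK'u⟩ := exists_compact_between hK hu hKu
  obtain ⟨L', hL', hLL', hL'v⟩ := exists_compact_between hL hv hLv
  exact ⟨K', L', hK', hL', hKK', hLL', (Set.prod_mono hK'u hL'v).trans huv⟩

theorem exists_isOpen_seq_prod_subset {A B : ℕ → Type*} [∀ k, TopologicalSpace (A k)]
    [∀ k, TopologicalSpace (B k)] [∀ k, LocallyCompactSpace (A k)] [∀ k, LocallyCompactSpace (B k)]
    {α : ∀ k, A k → A (k + 1)} {β : ∀ k, B k → B (k + 1)} (hα : ∀ k, Continuous (α k))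
    (hβ : ∀ k, Continuous (β k)) {V : ∀ k, Set (A k × B k)} (hV : ∀ k, IsOpen (V k))
    (hVmaps : ∀ k, MapsTo (Prod.map (α k) (β k)) (V k) (V (k + 1))) {K : Set (A 0)}
    {L : Set (B 0)} (hK : IsCompact K) (hL : IsCompact L) (hKL : K ×ˢ L ⊆ V 0) :
    ∃ (U : ∀ k, Set (A k)) (U' : ∀ k, Set (B k)), (∀ k, IsOpen (U k)) ∧ (∀ k, IsOpen (U' k)) ∧
      K ⊆ U 0 ∧ L ⊆ U' 0 ∧ (∀ k, MapsTo (α k) (U k) (U (k + 1))) ∧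
      (∀ k, MapsTo (β k) (U' k) (U' (k + 1))) ∧ ∀ k, U k ×ˢ U' k ⊆ V k := by
  have step : ∀ k (KL : Set (A k) × Set (B k)), IsCompact KL.1 → IsCompact KL.2 →
      KL.1 ×ˢ KL.2 ⊆ V k → ∃ KL' : Set (A (k + 1)) × Set (B (k + 1)),
        IsCompact KL'.1 ∧ IsCompact KL'.2 ∧ α k '' KL.1 ⊆ interior KL'.1 ∧
          β k '' KL.2 ⊆ interior KL'.2 ∧ KL'.1 ×ˢ KL'.2 ⊆ V (k + 1) := by
    rintro k ⟨K, L⟩ hK hL hKL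
    have himage : (α k '' K) ×ˢ (β k '' L) ⊆ V (k + 1) := by
      rw [prod_image_image_eq]
      exact ((hVmaps k).mono_left hKL).image_subset
    obtain ⟨K', L', hK', hL', hKK', hLL', hV'⟩ :=
      exists_isCompact_prod_subset (hK.image (hα k)) (hL.image (hβ k)) (hV (k + 1)) himage
    exact ⟨(K', L'), hK', hL', hKK', hLL', hV'⟩
  choose! next hnext using step
  obtain ⟨K₀, L₀, hK₀, hL₀, hKK₀, hLL₀, hV₀⟩ := exists_isCompact_prod_subset hK hL (hV 0) hKL
  let KL : ∀ k, Set (A k) × Set (B k) := fun k =>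
    Nat.rec (motive := fun k => Set (A k) × Set (B k)) (K₀, L₀) next k
  have hgood : ∀ k, IsCompact (KL k).1 ∧ IsCompact (KL k).2 ∧ (KL k).1 ×ˢ (KL k).2 ⊆ V k := by
    intro k
    induction k with
    | zero => exact ⟨hK₀, hL₀, hV₀⟩
    | succ k ih =>
      obtain ⟨h₁, h₂, -, -, h₃⟩ := hnext k (KL k) ih.1 ih.2.1 ih.2.2
      exact ⟨h₁, h₂, h₃⟩
  have hsucc (k : ℕ) := hnext k (KL k) (hgood k).1 (hgood k).2.1 (hgood k).2.2
  refine ⟨fun k => interior (KL k).1, fun k => interior (KL k).2, fun k => isOpen_interior,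
    fun k => isOpen_interior, hKK₀, hLL₀, fun k x hx => ?_, fun k y hy => ?_,
    fun k => (Set.prod_mono interior_subset interior_subset).trans (hgood k).2.2⟩
  · exact (hsucc k).2.2.1 (mem_image_of_mem _ (interior_subset hx))
  · exact (hsucc k).2.2.2.1 (mem_image_of_mem _ (interior_subset hy))

theorem isOpen_setOf_forall_mk_mem {T : Type*} [TopologicalSpace T] {P : T → Prop}
    (hP : IsClosed {t | P t}) {O : Set (Subtype P)} (hO : IsOpen O) :
    IsOpen {t | ∀ h : P t, ⟨t, h⟩ ∈ O} := by
  have hcompl : {t | ∀ h : P t, ⟨t, h⟩ ∈ O} = (Subtype.val '' Oᶜ)ᶜ := by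
    ext t
    simp
  rw [hcompl]
  exact (hP.isClosedEmbedding_subtypeVal.isClosedMap _ hO.isClosed_compl).isOpen_compl

section FiberProduct

variable {X Y Z : ℕ → Type u}
  {ιX : ∀ n, X n → X (n + 1)} {ιY : ∀ n, Y n → Y (n + 1)} {ιZ : ∀ n, Z n → Z (n + 1)}
  {f : ∀ n, X n → Z n} {g : ∀ n, Y n → Z n}
  {hf : ∀ n x, f (n + 1) (ιX n x) = ιZ n (f n x)} {hg : ∀ n y, g (n + 1) (ιY n y) = ιZ n (g n y)}

theorem transition_fibTrans_val {n m : ℕ} (h : n ≤ m) (p : FibProd (f n) (g n)) :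
    (transition (fibTrans ιX ιY ιZ f g hf hg) h p).val =
      (transition ιX h p.1.1, transition ιY h p.1.2) := by
  induction m, h using Nat.le_induction with
  | base => rw [transition_self, transition_self, transition_self]
  | succ m hm ih =>
    rw [transition_succ hm, transition_succ hm (x := p.1.1), transition_succ hm (x := p.1.2)]
    exact congrArg (Prod.map (ιX m) (ιY m)) ih

theorem exists_comparisonMap_mk_eq {n m : ℕ} (x : X n) (y : Y m)
    (h : colimMap ιX ιZ f hf (mk X ιX n x) = colimMap ιY ιZ g hg (mk Y ιY m y)) :
    ∃ (k : ℕ) (hn : n ≤ k) (hm : m ≤ k) (e : f k (transition ιX hn x) = g k (transition ιY hm y)),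
      comparisonMap ιX ιY ιZ f g hf hg (mk _ _ k ⟨(transition ιX hn x, transition ιY hm y), e⟩) =
        ⟨(mk X ιX n x, mk Y ιY m y), h⟩ := by
  obtain ⟨k, hn, hm, e⟩ :=
    (eventually_transition_eq_of_mk_eq (h : mk Z ιZ n (f n x) = mk Z ιZ m (g m y))).exists
  exact ⟨k, hn, hm, by rw [apply_transition f hf, apply_transition g hg, e],
    Subtype.ext (Prod.ext (mk_transition hn x) (mk_transition hm y))⟩

theorem continuous_comparisonMap [∀ n, TopologicalSpace (X n)] [∀ n, TopologicalSpace (Y n)]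
    [∀ n, TopologicalSpace (Z n)] : Continuous (comparisonMap ιX ιY ιZ f g hf hg) :=
  continuous_desc fun n =>
    (((continuous_mk n).comp (continuous_fst.comp continuous_subtype_val)).prodMk
      ((continuous_mk n).comp (continuous_snd.comp continuous_subtype_val))).subtype_mk _

theorem comparisonMap_injective : Injective (comparisonMap ιX ιY ιZ f g hf hg) := by
  intro a b hab
  obtain ⟨n, p, rfl⟩ := exists_mk_eq a
  obtain ⟨m, q, rfl⟩ := exists_mk_eq b
  have hX : mk X ιX n p.1.1 = mk X ιX m q.1.1 := congrArg (fun t => t.val.1) hab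
  have hY : mk Y ιY n p.1.2 = mk Y ιY m q.1.2 := congrArg (fun t => t.val.2) hab
  obtain ⟨k, ⟨hn, hm, eX⟩, _, _, eY⟩ :=
    ((eventually_transition_eq_of_mk_eq hX).and (eventually_transition_eq_of_mk_eq hY)).exists
  rw [← mk_transition (ι := fibTrans ιX ιY ιZ f g hf hg) hn p,
    ← mk_transition (ι := fibTrans ιX ιY ιZ f g hf hg) hm q]
  congr 1
  exact Subtype.ext (by rw [transition_fibTrans_val, transition_fibTrans_val, eX, eY])

theorem comparisonMap_surjective : Surjective (comparisonMap ιX ιY ιZ f g hf hg) := by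
  rintro ⟨⟨u, v⟩, h⟩
  obtain ⟨n, x, rfl⟩ := exists_mk_eq u
  obtain ⟨m, y, rfl⟩ := exists_mk_eq v
  obtain ⟨_, _, _, _, hk⟩ := exists_comparisonMap_mk_eq x y h
  exact ⟨_, hk⟩

theorem preimage_prod_subset_image_comparisonMap
    {O : Set (SeqColim (fun n => FibProd (f n) (g n)) (fibTrans ιX ιY ιZ f g hf hg))} {n : ℕ}
    {U : ∀ j, Set (X (n + j))} {U' : ∀ j, Set (Y (n + j))}
    (hU : ∀ j, MapsTo (ιX (n + j)) (U j) (U (j + 1)))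
    (hU' : ∀ j, MapsTo (ιY (n + j)) (U' j) (U' (j + 1)))
    (hUO : ∀ j a b (h : f (n + j) a = g (n + j) b), a ∈ U j → b ∈ U' j →
      mk _ _ (n + j) ⟨(a, b), h⟩ ∈ O) :
    Subtype.val ⁻¹' ((⋃ j, mk X ιX (n + j) '' U j) ×ˢ (⋃ j, mk Y ιY (n + j) '' U' j)) ⊆
      comparisonMap ιX ιY ιZ f g hf hg '' O := by
  rintro ⟨⟨u, v⟩, huv⟩ ⟨hu, hv⟩
  simp only [mem_iUnion, mem_image] at hu hv
  obtain ⟨j, x, hx, rfl⟩ := hu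
  obtain ⟨j', y, hy, rfl⟩ := hv
  obtain ⟨k, hn, hm, e, hk⟩ := exists_comparisonMap_mk_eq x y huv
  obtain ⟨i, rfl⟩ : ∃ i, k = n + i := ⟨k - n, by omega⟩
  exact ⟨_, hUO i _ _ e (mapsTo_transition hU (by omega) hn hx)
    (mapsTo_transition hU' (by omega) hm hy), hk⟩

theorem isOpenMap_comparisonMap [∀ n, TopologicalSpace (X n)] [∀ n, TopologicalSpace (Y n)]
    [∀ n, TopologicalSpace (Z n)] [∀ n, LocallyCompactSpace (X n)]
    [∀ n, LocallyCompactSpace (Y n)] [∀ n, T2Space (Z n)]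
    (hιX : ∀ n, Continuous (ιX n)) (hιY : ∀ n, Continuous (ιY n)) (hιZ : ∀ n, Injective (ιZ n))
    (hfc : ∀ n, Continuous (f n)) (hgc : ∀ n, Continuous (g n)) :
    IsOpenMap (comparisonMap ιX ιY ιZ f g hf hg) := by
  intro O hO
  refine isOpen_iff_forall_mem_open.2 ?_
  rintro _ ⟨w, hw, rfl⟩
  obtain ⟨n, p, rfl⟩ := exists_mk_eq w
  let V : ∀ k, Set (X k × Y k) := fun k => {q | ∀ h : f k q.1 = g k q.2, mk _ _ k ⟨q, h⟩ ∈ O}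
  have hV (k : ℕ) : IsOpen (V k) :=
    isOpen_setOf_forall_mk_mem (isClosed_eq ((hfc k).comp continuous_fst)
      ((hgc k).comp continuous_snd)) (hO.preimage (continuous_mk k))
  have hVmaps (k : ℕ) : MapsTo (Prod.map (ιX k) (ιY k)) (V k) (V (k + 1)) := by
    rintro ⟨a, b⟩ hab h'
    have hO' := hab (hιZ k (by rw [← hf, ← hg]; exact h'))
    rw [← mk_succ] at hO'
    exact hO'
  obtain ⟨U, U', hUo, hU'o, hpU, hpU', hU, hU', hUV⟩ :=
    exists_isOpen_seq_prod_subset (A := fun j => X (n + j)) (B := fun j => Y (n + j))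
      (fun j => hιX (n + j)) (fun j => hιY (n + j)) (fun j => hV (n + j)) (fun j => hVmaps (n + j))
      isCompact_singleton isCompact_singleton (singleton_prod_singleton.trans_subset
        (singleton_subset_iff.2 fun _ => hw))
  refine ⟨_, preimage_prod_subset_image_comparisonMap hU hU'
    (fun j a b h ha hb => hUV j ⟨ha, hb⟩ h), ((isOpen_iUnion_image_mk hιX hUo hU).prod
      (isOpen_iUnion_image_mk hιY hU'o hU')).preimage continuous_subtype_val, ?_⟩
  exact ⟨mem_iUnion.2 ⟨0, p.1.1, hpU rfl, rfl⟩, mem_iUnion.2 ⟨0, p.1.2, hpU' rfl, rfl⟩⟩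

end FiberProduct

theorem comparisonMap_isHomeomorph_general (X Y Z : ℕ → Type u)
    [∀ n, TopologicalSpace (X n)] [∀ n, TopologicalSpace (Y n)] [∀ n, TopologicalSpace (Z n)]
    (ιX : ∀ n, X n → X (n + 1)) (ιY : ∀ n, Y n → Y (n + 1)) (ιZ : ∀ n, Z n → Z (n + 1))
    (hιX : ∀ n, IsClosedEmbedding (ιX n)) (hιY : ∀ n, IsClosedEmbedding (ιY n))
    (hιZ : ∀ n, IsClosedEmbedding (ιZ n))
    (f : ∀ n, X n → Z n) (g : ∀ n, Y n → Z n)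
    (hfc : ∀ n, Continuous (f n)) (hgc : ∀ n, Continuous (g n))
    (hf : ∀ n x, f (n + 1) (ιX n x) = ιZ n (f n x))
    (hg : ∀ n y, g (n + 1) (ιY n y) = ιZ n (g n y))
    [∀ n, LocallyCompactSpace (X n)]
    [∀ n, LocallyCompactSpace (Y n)]
    [∀ n, T2Space (Z n)] :
    IsHomeomorph (comparisonMap ιX ιY ιZ f g hf hg) :=
  .mk continuous_comparisonMap
    (isOpenMap_comparisonMap (fun n => (hιX n).continuous) (fun n => (hιY n).continuous)
      (fun n => (hιZ n).injective) hfc hgc)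
    ⟨comparisonMap_injective, comparisonMap_surjective⟩

/-- **Harpaz's lemma.** Let `(X_i)`, `(Y_i)`, `(Z_i)` be `ℕ`-indexed diagrams of
topological spaces whose transition maps are closed embeddings, with compatible
continuous maps `f_i : X_i → Z_i`, `g_i : Y_i → Z_i`. If each `X_i`, `Y_i` is
locally compact Hausdorff and each `Z_i` is Hausdorff, then the natural map
`colim_i (X_i ×_{Z_i} Y_i) → (colim_i X_i) ×_{colim_i Z_i} (colim_i Y_i)`
is a homeomorphism. -/
theorem comparisonMap_isHomeomorph (X Y Z : ℕ → Type u)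
    [∀ n, TopologicalSpace (X n)] [∀ n, TopologicalSpace (Y n)] [∀ n, TopologicalSpace (Z n)]
    (ιX : ∀ n, X n → X (n + 1)) (ιY : ∀ n, Y n → Y (n + 1)) (ιZ : ∀ n, Z n → Z (n + 1))
    (hιX : ∀ n, IsClosedEmbedding (ιX n)) (hιY : ∀ n, IsClosedEmbedding (ιY n))
    (hιZ : ∀ n, IsClosedEmbedding (ιZ n))
    (f : ∀ n, X n → Z n) (g : ∀ n, Y n → Z n)
    (hfc : ∀ n, Continuous (f n)) (hgc : ∀ n, Continuous (g n))
    (hf : ∀ n x, f (n + 1) (ιX n x) = ιZ n (f n x))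
    (hg : ∀ n y, g (n + 1) (ιY n y) = ιZ n (g n y))
    [∀ n, LocallyCompactSpace (X n)] [∀ n, T2Space (X n)]
    [∀ n, LocallyCompactSpace (Y n)] [∀ n, T2Space (Y n)]
    [∀ n, T2Space (Z n)] :
    IsHomeomorph (comparisonMap ιX ιY ιZ f g hf hg) :=
  comparisonMap_isHomeomorph_general X Y Z ιX ιY ιZ hιX hιY hιZ f g hfc hgc hf hg
end

section
/- Let X be a Hausdorff topological space and n ≥ 1. Equip the set Ran_{≤n}(X) of nonempty subsets of X of cardinality at most n with the quotient topology from the surjection U_n : X^n → Ran_{≤n}(X) sending a tuple to its set of entries. Then U_n is a closed map; consequently U_n is a perfect quotient and Ran_{≤n}(X) is Hausdorff. -/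
/-- The set of nonempty subsets of `X` of cardinality at most `n`. -/
def RanLE (X : Type*) (n : ℕ) : Type _ :=
  {s : Set X // s.Nonempty ∧ s.Finite ∧ s.ncard ≤ n}

/-- The map `U_n : X^{n+1} → Ran_{≤ n+1}(X)` sending a tuple to the set of its
entries. -/
def toRan {X : Type*} (n : ℕ) (x : Fin (n + 1) → X) : RanLE X (n + 1) :=
  ⟨Set.range x, Set.range_nonempty x, Set.finite_range x, by
    classical
    have h : Set.range x = ↑(Finset.image x Finset.univ) := by simp
    rw [h, Set.ncard_coe_finset]
    exact Finset.card_image_le.trans (by simp)⟩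

/-- `Ran_{≤ n+1}(X)` carries the quotient topology of the surjection `U_n`. -/
instance ranTop (X : Type*) [TopologicalSpace X] (n : ℕ) :
    TopologicalSpace (RanLE X (n + 1)) :=
  TopologicalSpace.coinduced (toRan n) inferInstance

lemma toRan_eq_iff {X : Type*} {n : ℕ} {x y : Fin (n+1) → X} :
    toRan n x = toRan n y ↔ Set.range x = Set.range y := by
  constructor
  · intro h; exact congrArg Subtype.val h
  · intro h; exact Subtype.ext h

lemma toRan_surjective {X : Type*} (n : ℕ) : Function.Surjective (toRan (X := X) n) := by
  classical
  rintro ⟨S, hne, hfin, hcard⟩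
  have hF : 0 < hfin.toFinset.card := by
    rw [Finset.card_pos, Set.Finite.toFinset_nonempty]; exact hne
  have hcard' : hfin.toFinset.card ≤ n + 1 :=
    (Set.ncard_eq_toFinset_card _ hfin) ▸ hcard
  set F := hfin.toFinset with hFdef
  let e := F.equivFin
  have hx : ∀ i : Fin (n+1), min i.1 (F.card - 1) < F.card := by
    intro i; omega
  refine ⟨fun i => (e.symm ⟨min i.1 (F.card - 1), hx i⟩ : X), ?_⟩
  apply Subtype.ext
  show Set.range _ = S
  apply Set.eq_of_subset_of_subset
  · rintro _ ⟨i, rfl⟩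
    have := (e.symm ⟨min i.1 (F.card - 1), hx i⟩).2
    exact (Set.Finite.mem_toFinset hfin).mp this
  · intro a ha
    have haF : a ∈ F := by rwa [hFdef, Set.Finite.mem_toFinset]
    set j := e ⟨a, haF⟩ with hj
    have hjn : j.1 < n + 1 := lt_of_lt_of_le j.2 hcard'
    refine ⟨⟨j.1, hjn⟩, ?_⟩
    have hmin : min j.1 (F.card - 1) = j.1 := by have := j.2; omega
    have h2 : (⟨min j.1 (F.card - 1), hx ⟨j.1, hjn⟩⟩ : Fin F.card) = j := Fin.ext hmin
    show (e.symm ⟨min (⟨j.1, hjn⟩ : Fin (n+1)).1 (F.card - 1), hx ⟨j.1, hjn⟩⟩ : X) = a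
    rw [h2, hj, Equiv.symm_apply_apply]

lemma toRan_fiber_compact {X : Type*} [TopologicalSpace X] [T2Space X] (n : ℕ)
    (s : RanLE X (n+1)) : IsCompact (toRan (X := X) n ⁻¹' {s}) := by
  obtain ⟨S, hne, hfin, hcard⟩ := s
  have hsub : toRan (X := X) n ⁻¹' {⟨S, hne, hfin, hcard⟩} ⊆
      Set.pi Set.univ (fun _ : Fin (n+1) => S) := by
    intro x hx
    have : Set.range x = S := congrArg Subtype.val hx
    intro i _; rw [← this]; exact Set.mem_range_self i
  exact Set.Finite.isCompact ((Set.Finite.pi fun _ => hfin).subset hsub)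

lemma toRan_closedMap {X : Type*} [TopologicalSpace X] [T2Space X] (n : ℕ) :
    IsClosedMap (toRan (X := X) n) := by
  intro C hC
  rw [← isOpen_compl_iff, isOpen_coinduced, Set.preimage_compl, isOpen_compl_iff]
  have key : toRan (X := X) n ⁻¹' (toRan n '' C) =
      ⋃ (f : Fin (n+1) → Fin (n+1)) (g : Fin (n+1) → Fin (n+1)),
        ((fun y => y ∘ g) ⁻¹' C ∩ ⋂ i, {y : Fin (n+1) → X | y i = y (g (f i))}) := by
    ext y
    simp only [Set.mem_preimage, Set.mem_image, Set.mem_iUnion, Set.mem_inter_iff,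
      Set.mem_iInter, Set.mem_setOf_eq]
    constructor
    · rintro ⟨x, hxC, hxy⟩
      have hr : Set.range x = Set.range y := toRan_eq_iff.mp hxy
      have hf : ∀ i, ∃ j, x j = y i := fun i => by
        have : y i ∈ Set.range x := hr ▸ Set.mem_range_self i
        exact this
      have hg : ∀ j, ∃ i, y i = x j := fun j => by
        have : x j ∈ Set.range y := hr ▸ Set.mem_range_self j
        exact this
      choose f hfspec using hf
      choose g hgspec using hg
      refine ⟨f, g, ?_, ?_⟩
      · have : y ∘ g = x := funext fun j => hgspec j
        rwa [this]
      · intro i; rw [hgspec (f i), hfspec i]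
    · rintro ⟨f, g, hgC, heq⟩
      refine ⟨y ∘ g, hgC, toRan_eq_iff.mpr ?_⟩
      apply Set.eq_of_subset_of_subset
      · rintro _ ⟨j, rfl⟩; exact Set.mem_range_self (g j)
      · rintro _ ⟨i, rfl⟩; exact ⟨f i, (heq i).symm⟩
  rw [key]
  apply isClosed_iUnion_of_finite
  intro f
  apply isClosed_iUnion_of_finite
  intro g
  apply IsClosed.inter
  · exact hC.preimage (continuous_pi fun j => continuous_apply (g j))
  · exact isClosed_iInter fun i => isClosed_eq (continuous_apply i) (continuous_apply _)

/-- For `X` Hausdorff, the map `U_n : X^{n+1} → Ran_{≤ n+1}(X)` (with the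
quotient topology on the target) is a closed map; consequently it is a perfect
quotient (a closed continuous surjection with Hausdorff source and compact
fibers) and `Ran_{≤ n+1}(X)` is Hausdorff. -/
theorem toRan_perfectQuotient (X : Type*) [TopologicalSpace X] [T2Space X] (n : ℕ) :
    IsClosedMap (toRan (X := X) n) ∧ Continuous (toRan (X := X) n) ∧
      Function.Surjective (toRan (X := X) n) ∧
      (∀ s : RanLE X (n + 1), IsCompact (toRan (X := X) n ⁻¹' {s})) ∧
      T2Space (RanLE X (n + 1)) := by
  have hclosed := toRan_closedMap (X := X) n
  have hcont : Continuous (toRan (X := X) n) := continuous_coinduced_rng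
  have hsurj := toRan_surjective (X := X) n
  have hcpt := toRan_fiber_compact (X := X) n
  refine ⟨hclosed, hcont, hsurj, hcpt, ?_⟩
  constructor
  intro s t hst
  have hdisj : Disjoint (toRan (X := X) n ⁻¹' {s}) (toRan n ⁻¹' {t}) := by
    rw [Set.disjoint_left]
    rintro x hx hx'
    exact hst ((Set.mem_preimage.mp hx).symm.trans (Set.mem_preimage.mp hx'))
  obtain ⟨U, V, hU, hV, hsU, htV, hUV⟩ :=
    SeparatedNhds.of_isCompact_isCompact (hcpt s) (hcpt t) hdisj
  -- saturate
  have sat : ∀ (r : RanLE X (n+1)) (W : Set (Fin (n+1) → X)), IsOpen W →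
      toRan n ⁻¹' {r} ⊆ W → ∃ O : Set (RanLE X (n+1)), IsOpen O ∧ r ∈ O ∧
        toRan n ⁻¹' O ⊆ W := by
    intro r W hW hrW
    refine ⟨(toRan n '' Wᶜ)ᶜ, ?_, ?_, ?_⟩
    · rw [isOpen_compl_iff]; exact hclosed _ hW.isClosed_compl
    · rintro ⟨x, hxW, hxr⟩
      exact hxW (hrW (by simp [hxr]))
    · intro x hx
      by_contra hxW
      exact hx ⟨x, hxW, rfl⟩
  obtain ⟨O1, hO1, hsO1, hO1U⟩ := sat s U hU hsU
  obtain ⟨O2, hO2, htO2, hO2V⟩ := sat t V hV htV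
  refine ⟨O1, O2, hO1, hO2, hsO1, htO2, ?_⟩
  rw [Set.disjoint_left]
  intro r hr1 hr2
  obtain ⟨x, rfl⟩ := hsurj r
  exact Set.disjoint_left.mp hUV (hO1U hr1) (hO2V hr2)
end

section
/- Let M be a Hausdorff topological space and n ≥ 1. Let P_n be the poset of partitions of {1,…,n} ordered so that π ≤ π' iff π' refines π (π is coarser). Then the map s : M^n → Alex(P_n) sending a tuple (m_1,…,m_n) to its coincidence partition (the partition whose blocks are the equivalence classes of i ∼ j ⇔ m_i = m_j) is continuous, where Alex(P_n) carries the Alexandrov topology (opens are upward-closed sets). -/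
/-- The Alexandrov topology on a preordered set: open sets are exactly the
upward-closed subsets. -/
def alexandrov (P : Type*) [Preorder P] : TopologicalSpace P where
  IsOpen s := IsUpperSet s
  isOpen_univ := isUpperSet_univ
  isOpen_inter _ _ hs ht := hs.inter ht
  isOpen_sUnion _ h := isUpperSet_sUnion h

/-- The coincidence partition of a tuple `m : Fin n → M`, recorded as the setoid
`i ∼ j ↔ m i = m j` on `Fin n`. -/
def coincidence {M : Type*} {n : ℕ} (m : Fin n → M) : Setoid (Fin n) :=
  ⟨fun i j => m i = m j, ⟨fun _ => rfl, fun h => h.symm, fun h h' => h.trans h'⟩⟩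

/-! Every Alexandrov-open set containing `p` contains `Set.Ici p`, so continuity of the coincidence
map says that `{m' | coincidence m' ≤ coincidence m}` is open. That set is the finite intersection
of the sets `{m' | m' i ≠ m' j}` over the pairs `i, j` that `m` separates, which are open because
the diagonal of a Hausdorff space is closed. -/

theorem continuous_alexandrov_iff {X P : Type*} [TopologicalSpace X] [Preorder P] {f : X → P} :
    @Continuous X P _ (alexandrov P) f ↔ ∀ x, IsOpen {y | f x ≤ f y} := by
  refine ⟨fun hf x => (@continuous_def X P _ (alexandrov P) f).mp hf _ (isUpperSet_Ici (f x)),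
    fun h => (@continuous_def X P _ (alexandrov P) f).mpr fun U hU => ?_⟩
  refine isOpen_iff_forall_mem_open.mpr fun x hx => ⟨{y | f x ≤ f y}, ?_, h x, le_rfl⟩
  exact fun y hy => hU hy hx

theorem isOpen_setOf_forall_ne_imp_ne {ι M : Type*} [Finite ι] [TopologicalSpace M] [T2Space M]
    (m : ι → M) : IsOpen {m' : ι → M | ∀ i j, m i ≠ m j → m' i ≠ m' j} := by
  simp only [Set.ofPred_forall]
  exact isOpen_iInter_of_finite fun i => isOpen_iInter_of_finite fun j =>
    isOpen_iInter_of_finite fun _ => isOpen_ne_fun (continuous_apply i) (continuous_apply j)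

theorem coincidence_le_iff {M : Type*} {n : ℕ} {m m' : Fin n → M} :
    coincidence m' ≤ coincidence m ↔ ∀ i j, m i ≠ m j → m' i ≠ m' j :=
  ⟨fun h _ _ hm hm' => hm (h hm'), fun h _ _ hm' => not_imp_not.mp (h _ _) hm'⟩

theorem isOpen_setOf_coincidence_le {M : Type*} [TopologicalSpace M] [T2Space M] {n : ℕ}
    (m : Fin n → M) : IsOpen {m' : Fin n → M | coincidence m' ≤ coincidence m} := by
  simpa only [coincidence_le_iff] using isOpen_setOf_forall_ne_imp_ne m

/-- Partitions are setoids on `Fin n`; passing to the order dual makes finer partitions larger. -/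
theorem coincidence_continuous_general (M : Type*) [TopologicalSpace M] [T2Space M]
    (n : ℕ) :
    @Continuous (Fin n → M) (Setoid (Fin n))ᵒᵈ _ (alexandrov (Setoid (Fin n))ᵒᵈ)
      (fun m => OrderDual.toDual (coincidence m)) :=
  continuous_alexandrov_iff.mpr isOpen_setOf_coincidence_le

/-- Let `M` be Hausdorff and `n ≥ 1`. The map `M^n → Alex(P_n)` sending a tuple
to its coincidence partition is continuous, where `P_n` is the poset of
partitions of `{1,…,n}` ordered so that `π ≤ π'` iff `π'` refines `π` (here
encoded as setoids on `Fin n` with the order dual of the implication order,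
so that finer partitions are larger), and `Alex(P_n)` carries the Alexandrov
topology. -/
theorem coincidence_continuous (M : Type*) [TopologicalSpace M] [T2Space M]
    (n : ℕ) (hn : 1 ≤ n) :
    @Continuous (Fin n → M) (Setoid (Fin n))ᵒᵈ _ (alexandrov (Setoid (Fin n))ᵒᵈ)
      (fun m => OrderDual.toDual (coincidence m)) :=
  coincidence_continuous_general M n
end

section
/- In the category of poset-stratified topological spaces StrTop, small colimits exist and are computed componentwise: the underlying topological space of a colimit is the colimit of the underlying spaces in Top, the stratifying poset is the colimit of the posets, and the stratifying map is induced by the universal property together with the canonical map colim Alex(P_α) → Alex(colim P_α). In particular the forgetful functor StrTop → Top preserves small colimits. -/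
open CategoryTheory

universe u

/-- A poset-stratified topological space: a topological space `carrier`, a poset
`pos`, and a continuous surjection `str : carrier → Alex(pos)` onto the
Alexandrov space of `pos`. -/
structure StrSpace : Type (u + 1) where
  carrier : Type u
  [top : TopologicalSpace carrier]
  pos : Type u
  [ord : PartialOrder pos]
  str : carrier → pos
  cont : @Continuous carrier pos top (alexandrov pos) str
  surj : Function.Surjective str

attribute [instance] StrSpace.top StrSpace.ord

/-- A morphism of poset-stratified spaces: a continuous map `f` together with a
monotone map `r` such that `str' ∘ f = Alex(r) ∘ str`. -/
@[ext]
structure StrHom (Y W : StrSpace.{u}) where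
  f : Y.carrier → W.carrier
  r : Y.pos → W.pos
  cont : Continuous f
  mono : Monotone r
  compat : ∀ y, W.str (f y) = r (Y.str y)

instance : Category StrSpace.{u} where
  Hom := StrHom
  id Y := ⟨id, id, continuous_id, monotone_id, fun _ => rfl⟩
  comp φ ψ := ⟨fun y => ψ.f (φ.f y), fun p => ψ.r (φ.r p), ψ.cont.comp φ.cont,
    ψ.mono.comp φ.mono, fun y => (ψ.compat _).trans (congrArg ψ.r (φ.compat y))⟩
  id_comp _ := rfl
  comp_id _ := rfl
  assoc _ _ _ := rfl

/-- The forgetful functor from stratified spaces to topological spaces. -/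
def FgtTop : StrSpace.{u} ⥤ TopCat.{u} where
  obj Y := TopCat.of Y.carrier
  map φ := TopCat.ofHom (ContinuousMap.mk φ.f φ.cont)
  map_id _ := rfl
  map_comp _ _ := rfl

/-- The forgetful functor from stratified spaces to posets. -/
def FgtPos : StrSpace.{u} ⥤ PartOrd.{u} where
  obj Y := PartOrd.of Y.pos
  map φ := PartOrd.ofHom (OrderHom.mk φ.r φ.mono)
  map_id _ := rfl
  map_comp _ _ := rfl

open CategoryTheory Limits

namespace StrColim

/-- A monotone map is continuous for the Alexandrov topologies. -/
lemma alex_continuous {P Q : Type*} [Preorder P] [Preorder Q] {r : P → Q}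
    (h : Monotone r) : @Continuous P Q (alexandrov P) (alexandrov Q) r := by
  rw [@continuous_def P Q (alexandrov P) (alexandrov Q)]
  intro s hs
  exact IsUpperSet.preimage hs h

/-- View a `PartOrd` morphism as an order homomorphism. -/
def toOrd {X Y : PartOrd.{u}} (f : X ⟶ Y) : X →o Y := f.hom

variable {J : Type u} [Category.{u} J] (F : J ⥤ StrSpace.{u})

/-- The disjoint union of the posets of the diagram. -/
def Pre : Type u := Σ j : J, (F.obj j).pos

/-- One-step relation generating the colimit preorder. -/
def step (x y : Pre F) : Prop :=
  (∃ f : x.1 ⟶ y.1, (F.map f).r x.2 ≤ y.2) ∨ (∃ f : y.1 ⟶ x.1, x.2 ≤ (F.map f).r y.2)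

instance : Preorder (Pre F) where
  le := Relation.ReflTransGen (step F)
  le_refl _ := Relation.ReflTransGen.refl
  le_trans _ _ _ := Relation.ReflTransGen.trans

lemma le_of_step {x y : Pre F} (h : step F x y) : x ≤ y :=
  Relation.ReflTransGen.single h

/-- The colimit poset. -/
def CP : Type u := Antisymmetrization (Pre F) (· ≤ ·)

instance : PartialOrder (CP F) := @instPartialOrderAntisymmetrization (Pre F) _

/-- The quotient map onto the colimit poset. -/
def mkCP (x : Pre F) : CP F := @toAntisymmetrization (Pre F) (· ≤ ·) _ x

lemma mkCP_le_mkCP {x y : Pre F} (h : x ≤ y) : mkCP F x ≤ mkCP F y := h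

lemma mkCP_eq_mkCP {x y : Pre F} (h₁ : x ≤ y) (h₂ : y ≤ x) : mkCP F x = mkCP F y :=
  Quotient.sound ⟨h₁, h₂⟩

lemma mkCP_surjective : Function.Surjective (mkCP F) := Quotient.exists_rep

lemma step_of_le {j : J} {p q : (F.obj j).pos} (h : p ≤ q) :
    step F ⟨j, p⟩ ⟨j, q⟩ := by
  refine Or.inl ⟨𝟙 j, ?_⟩
  show (F.map (𝟙 j)).r p ≤ q
  rw [F.map_id]
  exact h

/-- The canonical leg into the colimit poset. -/
def iotaP (j : J) : (F.obj j).pos →o CP F where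
  toFun p := mkCP F ⟨j, p⟩
  monotone' _ _ h := mkCP_le_mkCP F (le_of_step F (step_of_le F h))

lemma iotaP_w {j k : J} (f : j ⟶ k) (p : (F.obj j).pos) :
    iotaP F k ((F.map f).r p) = iotaP F j p := by
  refine mkCP_eq_mkCP F ?_ ?_
  · exact le_of_step F (Or.inr ⟨f, le_refl _⟩)
  · exact le_of_step F (Or.inl ⟨f, le_refl _⟩)

/-- The cocone over the poset diagram. -/
def coconeP : Cocone (F ⋙ FgtPos) where
  pt := PartOrd.of (CP F)
  ι :=
    { app := fun j => PartOrd.ofHom (iotaP F j)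
      naturality := fun j k f => by
        ext p
        exact iotaP_w F f p }

section
variable (s : Cocone (F ⋙ FgtPos))

/-- A leg of a cocone over the poset diagram, as an order hom. -/
def appP (j : J) : (F.obj j).pos →o s.pt := toOrd (s.ι.app j)

lemma appP_w {j k : J} (f : j ⟶ k) (p : (F.obj j).pos) :
    appP F s k ((F.map f).r p) = appP F s j p :=
  DFunLike.congr_fun (congrArg toOrd (s.w f)) p

/-- Raw descent map on the disjoint union. -/
def gP (x : Pre F) : s.pt := appP F s x.1 x.2

lemma gP_mono : ∀ {x y : Pre F}, x ≤ y → gP F s x ≤ gP F s y := by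
  intro x y h
  induction h with
  | refl => exact le_refl _
  | tail _ hstep ih =>
    refine le_trans ih ?_
    rename_i b c _
    rcases hstep with ⟨f, hf⟩ | ⟨f, hf⟩
    · calc gP F s b = appP F s c.1 ((F.map f).r b.2) := (appP_w F s f b.2).symm
        _ ≤ appP F s c.1 c.2 := (appP F s c.1).mono hf
    · calc gP F s b ≤ appP F s b.1 ((F.map f).r c.2) := (appP F s b.1).mono hf
        _ = appP F s c.1 c.2 := appP_w F s f c.2

/-- The descended map out of the colimit poset. -/
def descP : CP F →o s.pt where
  toFun := Quotient.lift (gP F s)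
    (fun _ _ h => le_antisymm (gP_mono F s h.1) (gP_mono F s h.2))
  monotone' a b := Quotient.inductionOn₂' a b (fun _ _ h => gP_mono F s h)

lemma descP_mkCP (x : Pre F) : descP F s (mkCP F x) = gP F s x := rfl

end

/-- The poset cocone is a colimit in `PartOrd`. -/
def isColimitP : IsColimit (coconeP F) where
  desc s := PartOrd.ofHom (descP F s)
  fac s j := by
    ext p
    rfl
  uniq s m hm := by
    ext a
    obtain ⟨x, rfl⟩ := mkCP_surjective F a
    exact DFunLike.congr_fun (congrArg toOrd (hm x.1)) x.2

/-! ### The topological side -/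

/-- The colimit of the underlying spaces. -/
noncomputable def CT : TopCat.{u} := colimit (F ⋙ FgtTop)

/-- The legs into the colimit space. -/
noncomputable def iotaT (j : J) : FgtTop.obj (F.obj j) ⟶ CT F :=
  colimit.ι (F ⋙ FgtTop) j

/-- The cocone of stratification maps, with vertex the Alexandrov space of the
colimit poset. -/
noncomputable def strCocone : Cocone (F ⋙ FgtTop) where
  pt := @TopCat.of (CP F) (alexandrov (CP F))
  ι :=
    { app := fun j =>
        @TopCat.ofHom _ _ _ (alexandrov (CP F)) (@ContinuousMap.mk _ _ _ (alexandrov (CP F))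
          (fun y => iotaP F j ((F.obj j).str y))
          (by
            exact @Continuous.comp _ _ _ _ (alexandrov _) (alexandrov _) _ _
              (alex_continuous (iotaP F j).monotone) (F.obj j).cont))
      naturality := fun j k f => by
        ext y
        show iotaP F k ((F.obj k).str ((F.map f).f y)) = iotaP F j ((F.obj j).str y)
        rw [(F.map f).compat y]
        exact iotaP_w F f ((F.obj j).str y) }

/-- The stratification map of the colimit. -/
noncomputable def strT : CT F ⟶ @TopCat.of (CP F) (alexandrov (CP F)) :=
  colimit.desc (F ⋙ FgtTop) (strCocone F)

lemma strT_iotaT (j : J) (y : (F.obj j).carrier) :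
    strT F (iotaT F j y) = iotaP F j ((F.obj j).str y) :=
  ConcreteCategory.congr_hom (colimit.ι_desc (strCocone F) j) y

lemma iotaT_jointly_surjective (x : CT F) :
    ∃ (j : J) (y : (F.obj j).carrier), iotaT F j y = x := by
  obtain ⟨j, y, h⟩ := Types.jointly_surjective_of_isColimit
    (isColimitOfPreserves (forget TopCat) (colimit.isColimit (F ⋙ FgtTop))) x
  exact ⟨j, y, h⟩

/-! ### The colimit stratified space -/

/-- The colimit stratified space. -/
noncomputable def Cobj : StrSpace.{u} where
  carrier := CT F
  pos := CP F
  str := strT F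
  cont := @ContinuousMap.continuous _ _ _ (alexandrov (CP F)) (strT F).hom
  surj := by
    intro b
    obtain ⟨⟨j, p⟩, rfl⟩ := mkCP_surjective F b
    obtain ⟨y, rfl⟩ := (F.obj j).surj p
    exact ⟨iotaT F j y, strT_iotaT F j y⟩

/-- The colimit cocone in `StrSpace`. -/
noncomputable def coconeStr : Cocone F where
  pt := Cobj F
  ι :=
    { app := fun j =>
        { f := iotaT F j
          r := iotaP F j
          cont := (iotaT F j).hom.continuous
          mono := (iotaP F j).monotone
          compat := fun y => strT_iotaT F j y }
      naturality := fun j k f => by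
        refine StrHom.ext ?_ ?_
        · funext y
          exact ConcreteCategory.congr_hom (colimit.w (F ⋙ FgtTop) f) y
        · funext p
          exact iotaP_w F f p }

/-- The colimit cocone is a colimit. -/
noncomputable def isColimitStr : IsColimit (coconeStr F) where
  desc s :=
    { f := colimit.desc (F ⋙ FgtTop) (FgtTop.mapCocone s)
      r := descP F (FgtPos.mapCocone s)
      cont := (colimit.desc (F ⋙ FgtTop) (FgtTop.mapCocone s)).hom.continuous
      mono := (descP F (FgtPos.mapCocone s)).monotone
      compat := by
        intro x
        obtain ⟨j, y, rfl⟩ := iotaT_jointly_surjective F x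
        have h1 : colimit.desc (F ⋙ FgtTop) (FgtTop.mapCocone s) (iotaT F j y)
            = (s.ι.app j).f y :=
          ConcreteCategory.congr_hom (colimit.ι_desc (FgtTop.mapCocone s) j) y
        have h2 : (Cobj F).str (iotaT F j y) = iotaP F j ((F.obj j).str y) :=
          strT_iotaT F j y
        exact (congrArg s.pt.str h1).trans (((s.ι.app j).compat y).trans
          ((congrArg (descP F (FgtPos.mapCocone s)) h2).symm)) }
  fac s j := by
    refine StrHom.ext ?_ ?_
    · funext y
      exact ConcreteCategory.congr_hom (colimit.ι_desc (FgtTop.mapCocone s) j) y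
    · funext p
      rfl
  uniq s m hm := by
    refine StrHom.ext ?_ ?_
    · have : (TopCat.ofHom (ContinuousMap.mk m.f m.cont) : CT F ⟶ (FgtTop.mapCocone s).pt)
          = colimit.desc (F ⋙ FgtTop) (FgtTop.mapCocone s) := by
        refine (colimit.isColimit (F ⋙ FgtTop)).uniq (FgtTop.mapCocone s) _ (fun j => ?_)
        ext y
        exact congrFun (congrArg StrHom.f (hm j)) y
      funext x
      exact ConcreteCategory.congr_hom this x
    · funext a
      obtain ⟨x, rfl⟩ := mkCP_surjective F a
      exact congrFun (congrArg StrHom.r (hm x.1)) x.2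

/-- The mapped cocone under `FgtTop` is a colimit. -/
noncomputable def isColimitMapTop : IsColimit (FgtTop.mapCocone (coconeStr F)) :=
  (colimit.isColimit (F ⋙ FgtTop)).ofIsoColimit
    (Cocones.ext (Iso.refl _) (fun j => by
      ext y
      rfl))

/-- The mapped cocone under `FgtPos` is a colimit. -/
noncomputable def isColimitMapPos : IsColimit (FgtPos.mapCocone (coconeStr F)) :=
  (isColimitP F).ofIsoColimit
    (Cocones.ext (Iso.refl _) (fun j => by
      ext p
      rfl))

end StrColim


/-- In the category `StrTop` of poset-stratified topological spaces, small
colimits exist and are computed componentwise: the forgetful functors to `Top`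
and to the category of posets both preserve small colimits (so the underlying
space of a colimit is the colimit of the underlying spaces and the stratifying
poset is the colimit of the posets). -/
theorem strSpace_hasColimits_and_forget_preserves :
    Limits.HasColimitsOfSize.{u, u} StrSpace.{u} ∧
    Nonempty (Limits.PreservesColimitsOfSize.{u, u} FgtTop.{u}) ∧
    Nonempty (Limits.PreservesColimitsOfSize.{u, u} FgtPos.{u}) := by
  have hcol : Limits.HasColimitsOfSize.{u, u} StrSpace.{u} :=
    { has_colimits_of_shape := fun J _ =>
        { has_colimit := fun F =>
            Limits.HasColimit.mk ⟨StrColim.coconeStr F, StrColim.isColimitStr F⟩ } }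
  refine ⟨hcol, ⟨?_⟩, ⟨?_⟩⟩
  · exact
      { preservesColimitsOfShape := fun {J} _ =>
          { preservesColimit := fun {F} =>
              Limits.preservesColimit_of_preserves_colimit_cocone
                (StrColim.isColimitStr F) (StrColim.isColimitMapTop F) } }
  · exact
      { preservesColimitsOfShape := fun {J} _ =>
          { preservesColimit := fun {F} =>
              Limits.preservesColimit_of_preserves_colimit_cocone
                (StrColim.isColimitStr F) (StrColim.isColimitMapPos F) } }
end

section
/- In the category of poset-stratified topological spaces, finite limits exist and the forgetful functor to Top preserves them: for a finite diagram (Y_α, P_α, s_α), the limit is (lim Y_α, lim P_α, s) where the underlying space is the limit in Top, using that for finite diagrams the canonical map Alex(lim P_α) → lim Alex(P_α) is a homeomorphism. -/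
open CategoryTheory

universe u

namespace StrAux

open Limits

variable {J : Type} [SmallCategory J] (F : J ⥤ StrSpace.{u})

/-- Sections of the underlying topological diagram. -/
def Sec : Type u :=
  { y : ∀ j, (F.obj j).carrier // ∀ {j j'} (f : j ⟶ j'), (F.map f).f (y j) = y j' }

instance : TopologicalSpace (Sec F) :=
  instTopologicalSpaceSubtype

/-- Sections of the underlying poset diagram. -/
def PSec : Type u :=
  { p : ∀ j, (F.obj j).pos // ∀ {j j'} (f : j ⟶ j'), (F.map f).r (p j) = p j' }

instance : PartialOrder (PSec F) :=
  Subtype.partialOrder _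

/-- The induced stratification map on sections, into the full poset of sections. -/
def strFull (y : Sec F) : PSec F :=
  ⟨fun j => (F.obj j).str (y.1 j), fun f => by
    rw [← (F.map f).compat, y.2 f]⟩

/-- The image of the section stratification map; this is the poset of the limit. -/
def LPos : Type u := { p : PSec F // ∃ y, strFull F y = p }

instance : PartialOrder (LPos F) :=
  Subtype.partialOrder _

/-- The stratification map of the limit. -/
def limStr (y : Sec F) : LPos F := ⟨strFull F y, y, rfl⟩

lemma limStr_surj : Function.Surjective (limStr F) := by
  rintro ⟨p, y, rfl⟩
  exact ⟨y, rfl⟩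

lemma proj_cont (j : J) :
    @Continuous _ _ inferInstance (alexandrov (F.obj j).pos) (fun y : Sec F => (F.obj j).str (y.1 j)) := by
  letI := alexandrov (F.obj j).pos
  exact (F.obj j).cont.comp ((continuous_apply j).comp continuous_subtype_val)

lemma limStr_cont [FinCategory J] :
    @Continuous _ _ inferInstance (alexandrov (LPos F)) (limStr F) := by
  rw [continuous_def]
  intro U hU
  have hU' : IsUpperSet U := hU
  have hset : limStr F ⁻¹' U =
      ⋃ u : U, ⋂ j, (fun y : Sec F => (F.obj j).str (y.1 j)) ⁻¹' Set.Ici ((u : LPos F).1.1 j) := by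
    ext y
    simp only [Set.mem_preimage, Set.mem_iUnion, Set.mem_iInter, Set.mem_Ici]
    constructor
    · intro hy
      exact ⟨⟨limStr F y, hy⟩, fun j => le_refl _⟩
    · rintro ⟨u, hu⟩
      have hle : (u : LPos F) ≤ limStr F y := fun j => hu j
      exact hU' hle u.2
  rw [hset]
  refine isOpen_iUnion fun u => isOpen_iInter_of_finite fun j => ?_
  exact @Continuous.isOpen_preimage _ _ _ (alexandrov (F.obj j).pos) _ (proj_cont F j) _
    (isUpperSet_Ici _)

/-- The limit stratified space. -/
def limObj [FinCategory J] : StrSpace.{u} where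
  carrier := Sec F
  pos := LPos F
  str := limStr F
  cont := limStr_cont F
  surj := limStr_surj F

/-- The projection morphisms. -/
def limProj [FinCategory J] (j : J) : limObj F ⟶ F.obj j where
  f := fun y => y.1 j
  r := fun p => p.1.1 j
  cont := (continuous_apply j).comp continuous_subtype_val
  mono := fun _ _ h => h j
  compat := fun _ => rfl

/-- The limit cone. -/
def limCone [FinCategory J] : Cone F where
  pt := limObj F
  π :=
    { app := limProj F
      naturality := fun j j' f => by
        apply StrHom.ext
        · funext y
          exact (y.2 f).symm
        · funext p
          exact (p.1.2 f).symm }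

/-- The limit cone is a limit. -/
def limConeIsLimit [FinCategory J] : IsLimit (limCone F) where
  lift c :=
    { f := fun z => ⟨fun j => (c.π.app j).f z, fun {j j'} f => by
        have := congrArg StrHom.f (c.π.naturality f)
        exact (congrFun this z).symm⟩
      r := fun p => by
        refine ⟨⟨fun j => (c.π.app j).r p, fun {j j'} f => by
          have := congrArg StrHom.r (c.π.naturality f)
          exact (congrFun this p).symm⟩, ?_⟩
        obtain ⟨z, rfl⟩ := c.pt.surj p
        refine ⟨⟨fun j => (c.π.app j).f z, fun {j j'} f => by
          have := congrArg StrHom.f (c.π.naturality f)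
          exact (congrFun this z).symm⟩, ?_⟩
        apply Subtype.ext
        funext j
        exact (c.π.app j).compat z
      cont := Continuous.subtype_mk (continuous_pi fun j => (c.π.app j).cont) _
      mono := fun p q h j => (c.π.app j).mono h
      compat := fun z => by
        apply Subtype.ext
        apply Subtype.ext
        funext j
        exact (c.π.app j).compat z }
  fac c j := by
    apply StrHom.ext
    · funext z; rfl
    · funext p; rfl
  uniq c m hm := by
    apply StrHom.ext
    · funext z
      apply Subtype.ext
      funext j
      exact congrFun (congrArg StrHom.f (hm j)) z
    · funext p
      apply Subtype.ext
      apply Subtype.ext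
      funext j
      exact congrFun (congrArg StrHom.r (hm j)) p

/-- The forgetful functor maps the limit cone to a limit cone in `TopCat`. -/
def topMapConeIsLimit [FinCategory J] : IsLimit (FgtTop.mapCone (limCone F)) where
  lift c :=
    TopCat.ofHom (ContinuousMap.mk (fun (z : c.pt) => (⟨fun j => c.π.app j z, fun {j j'} f => by
      exact ConcreteCategory.congr_hom (c.w f) z⟩ : Sec F))
      (Continuous.subtype_mk (continuous_pi fun j => (c.π.app j).hom.continuous) _))
  fac c j := by
    ext z
    rfl
  uniq c m hm := by
    ext z
    apply Subtype.ext
    funext j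
    exact ConcreteCategory.congr_hom (hm j) z

end StrAux

/-- In the category `StrTop` of poset-stratified topological spaces, finite
limits exist and the forgetful functor to `Top` preserves them: the underlying
topological space of a finite limit is the limit of the underlying spaces in
`Top` (using that for finite diagrams the canonical map
`Alex(lim P_α) → lim Alex(P_α)` is a homeomorphism). -/
theorem strSpace_hasFiniteLimits_and_forget_preserves :
    Limits.HasFiniteLimits StrSpace.{u} ∧
    Nonempty (Limits.PreservesFiniteLimits FgtTop.{u}) := by
  constructor
  · exact ⟨fun J _ _ =>
      { has_limit := fun F => Limits.HasLimit.mk ⟨StrAux.limCone F, StrAux.limConeIsLimit F⟩ }⟩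
  · exact ⟨⟨fun J _ _ =>
      ⟨fun {F} => Limits.preservesLimit_of_preserves_limit_cone
        (StrAux.limConeIsLimit F) (StrAux.topMapConeIsLimit F)⟩⟩⟩
end
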